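/- arXiv:2112.04716 — 3 statements merged into one kernel-verified Lean document; each statement's English description precedes it below -/
import Mathlib

section
/- (Proposition 2, eigenvalue form) Let n, d be positive natural numbers, let φ i, φ' i ∈ ℝ^d (i = 1,…,n), let Φ and Φ' be the n×d real matrices whose i-th rows are φ i and φ' i, and let 0 < γ ≤ 1. If ∑_{i=1}^n ⟨φ i, φ' i⟩ ≥ (1/γ) ∑_{i=1}^n ‖φ i‖², then the characteristic polynomial of the complexification of the d×d matrix M := Φᵀ(Φ − γΦ') has a root λ ∈ ℂ with Re(λ) ≤ 0. -/
/-!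
The trace of `Φᵀ(Φ - γΦ')` is `∑ ‖φ i‖² - γ ∑ ⟪φ i, φ' i⟫ ≤ 0`. Over `ℂ` the trace is the sum
of the `d > 0` roots of the characteristic polynomial, counted with multiplicity, so they cannot
all have positive real part.
-/

open scoped RealInnerProductSpace Matrix

namespace Matrix

theorem exists_isRoot_charpoly_re_nonpos_of_re_trace_nonpos {ι : Type*} [Fintype ι]
    [DecidableEq ι] [Nonempty ι] (A : Matrix ι ι ℂ) (h : A.trace.re ≤ 0) :
    ∃ z : ℂ, A.charpoly.IsRoot z ∧ z.re ≤ 0 := by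
  by_contra! hpos
  have hroots : A.charpoly.roots ≠ 0 := by
    rw [← Multiset.card_pos, IsAlgClosed.card_roots_eq_natDegree, A.charpoly_natDegree_eq_dim]
    exact Fintype.card_pos
  have hsum : 0 < (A.charpoly.roots.map Complex.re).sum := by
    simpa using Multiset.sum_lt_sum_of_nonempty (f := fun _ => (0 : ℝ)) hroots
      fun z hz => hpos z (Polynomial.isRoot_of_mem_roots hz)
  have hre : A.charpoly.roots.sum.re = (A.charpoly.roots.map Complex.re).sum :=
    map_multiset_sum Complex.reAddGroupHom _
  rw [trace_eq_sum_roots_charpoly, hre] at h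
  linarith

theorem trace_transpose_mul_eq_sum_inner {ι κ : Type*} [Fintype ι] [Fintype κ]
    (φ ψ : ι → EuclideanSpace ℝ κ) :
    ((of fun i j => φ i j)ᵀ * of fun i j => ψ i j).trace = ∑ i, ⟪φ i, ψ i⟫ := by
  simp only [trace, diag, mul_apply, transpose_apply, of_apply, PiLp.inner_apply,
    RCLike.inner_apply, conj_trivial]
  rw [Finset.sum_comm]
  simp_rw [mul_comm]

end Matrix

theorem stmt_2_general (n d : ℕ) (hd : 0 < d)
    (φ φ' : Fin n → EuclideanSpace ℝ (Fin d)) (γ : ℝ) (hγ0 : 0 < γ)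
    (h : (1 / γ) * ∑ i : Fin n, ‖φ i‖ ^ 2 ≤ ∑ i : Fin n, ⟪φ i, φ' i⟫) :
    ∃ z : ℂ,
      ((((Matrix.of fun i j => φ i j)ᵀ *
          (Matrix.of (fun i j => φ i j) -
            γ • Matrix.of fun i j => φ' i j)).map (algebraMap ℝ ℂ)).charpoly).IsRoot z ∧
      z.re ≤ 0 := by
  have : Nonempty (Fin d) := Fin.pos_iff_nonempty.mp hd
  have hdiff : (Matrix.of (fun i j => φ i j) - γ • Matrix.of fun i j => φ' i j) =
      Matrix.of fun i j => (φ i - γ • φ' i) j := by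
    ext; simp
  have hnorm : ∑ i, ‖φ i‖ ^ 2 ≤ γ * ∑ i, ⟪φ i, φ' i⟫ := by
    rwa [one_div, inv_mul_le_iff₀ hγ0] at h
  have htrace : ((Matrix.of fun i j => φ i j)ᵀ *
      (Matrix.of (fun i j => φ i j) - γ • Matrix.of fun i j => φ' i j)).trace ≤ 0 := by
    rw [hdiff, Matrix.trace_transpose_mul_eq_sum_inner]
    simp only [inner_sub_right, real_inner_smul_right, real_inner_self_eq_norm_sq,
      Finset.sum_sub_distrib, ← Finset.mul_sum]
    linarith
  apply Matrix.exists_isRoot_charpoly_re_nonpos_of_re_trace_nonpos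
  rw [← AddMonoidHom.map_trace]
  simpa using htrace

theorem stmt_2 (n d : ℕ) (hn : 0 < n) (hd : 0 < d)
    (φ φ' : Fin n → EuclideanSpace ℝ (Fin d)) (γ : ℝ) (hγ0 : 0 < γ) (hγ1 : γ ≤ 1)
    (h : (1 / γ) * ∑ i : Fin n, ‖φ i‖ ^ 2 ≤ ∑ i : Fin n, ⟪φ i, φ' i⟫) :
    ∃ z : ℂ,
      ((((Matrix.of fun i j => φ i j)ᵀ *
          (Matrix.of (fun i j => φ i j) -
            γ • Matrix.of fun i j => φ' i j)).map (algebraMap ℝ ℂ)).charpoly).IsRoot z ∧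
      z.re ≤ 0 :=
  stmt_2_general n d hd φ φ' γ hγ0 h
end

section
/- (Proposition 2, divergence form) Let n, d be positive natural numbers, let φ i, φ' i ∈ ℝ^d (i = 1,…,n), let Φ and Φ' be the n×d real matrices whose i-th rows are φ i and φ' i, and let 0 < γ ≤ 1. If ∑_{i=1}^n ⟨φ i, φ' i⟩ ≥ (1/γ) ∑_{i=1}^n ‖φ i‖², then for every η > 0 the powers (I − η·M_ℂ)^k of the complexified TD iteration matrix do not converge to the zero matrix as k → ∞, where M_ℂ is the entrywise complexification of M := Φᵀ(Φ − γΦ'). In particular, the linear TD iterates w_{k+1} = (I − ηM)w_k do not converge to the TD fixed point from every initialization. -/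
/-!
Since `⟪φ i, φ i⟫ = ‖φ i‖²`, the trace of `M = Φᵀ(Φ - γΦ')` is
`∑ ‖φ i‖² - γ ∑ ⟪φ i, φ' i⟫ ≤ 0`, so the trace of `I - ηM` is at least `d`. The `d` complex
eigenvalues of `I - ηM` sum to its trace, hence one of them has real part, and so modulus,
at least `1`. Along an eigenvector for it the powers of `I - ηM` do not decay, and a real matrix
whose powers kill every real vector in the limit has powers tending to `0`.
-/

open scoped RealInnerProductSpace Matrix
open Filter Topology

namespace Matrix

variable {ι : Type*} [Fintype ι] [DecidableEq ι]

theorem norm_lt_one_of_isRoot_charpoly_of_tendsto_pow {𝕜 : Type*} [NormedField 𝕜]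
    {A : Matrix ι ι 𝕜} (hA : Tendsto (fun k : ℕ => A ^ k) atTop (𝓝 0)) {μ : 𝕜}
    (hμ : A.charpoly.IsRoot μ) : ‖μ‖ < 1 := by
  obtain ⟨v, hv⟩ := ((Module.End.hasEigenvalue_iff_isRoot_charpoly A.toLin' μ).2
    (by rwa [charpoly_toLin'])).exists_hasEigenvector
  obtain ⟨j, hj⟩ := Function.ne_iff.1 hv.2
  have hcoord : Tendsto (fun k : ℕ => μ ^ k * v j) atTop (𝓝 0) := by
    have hcont : Continuous fun B : Matrix ι ι 𝕜 => (B *ᵥ v) j :=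
      (continuous_apply j).comp (continuous_id.matrix_mulVec continuous_const)
    convert (hcont.tendsto 0).comp hA using 2 with k
    · rw [Function.comp_apply, ← toLin'_apply, toLin'_pow, hv.pow_apply]
      rfl
    · simp
  have hpow : Tendsto (fun k : ℕ => μ ^ k) atTop (𝓝 0) := by
    simpa only [mul_inv_cancel_right₀ hj, zero_mul] using hcoord.mul_const (v j)⁻¹
  exact tendsto_pow_atTop_nhds_zero_iff_norm_lt_one.1 hpow

theorem exists_isRoot_charpoly_le_re_of_card_mul_le [Nonempty ι] (A : Matrix ι ι ℂ) {c : ℝ}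
    (hc : Fintype.card ι * c ≤ A.trace.re) : ∃ μ, A.charpoly.IsRoot μ ∧ c ≤ μ.re := by
  set s := A.charpoly.roots
  have hcard : Multiset.card s = Fintype.card ι := by
    rw [Polynomial.splits_iff_card_roots.1 (IsAlgClosed.splits _), charpoly_natDegree_eq_dim]
  have hsum : (s.map Complex.re).sum = A.trace.re := by
    rw [trace_eq_sum_roots_charpoly]
    exact (map_multiset_sum Complex.reAddGroupHom s).symm
  by_contra! hlt
  have hs : s ≠ 0 := Multiset.card_pos.1 (hcard ▸ Fintype.card_pos)
  have hlt_sum := Multiset.sum_lt_sum_of_nonempty hs fun μ hμ =>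
    hlt μ (Polynomial.isRoot_of_mem_roots hμ)
  rw [Multiset.map_const', Multiset.sum_replicate, hcard, nsmul_eq_mul, hsum] at hlt_sum
  exact hc.not_gt hlt_sum

theorem trace_transpose_of_mul_of {m κ : Type*} [Fintype m] [Fintype κ]
    (x y : m → EuclideanSpace ℝ κ) :
    ((of fun i j => x i j)ᵀ * of fun i j => y i j).trace = ∑ i, ⟪x i, y i⟫ := by
  simp [trace, mul_apply, PiLp.inner_apply, Finset.sum_comm (γ := m), mul_comm]

theorem tendsto_zero_of_forall_tendsto_mulVec {α m n R : Type*} [Fintype n] [DecidableEq n]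
    [NonAssocSemiring R] [TopologicalSpace R] {l : Filter α} {f : α → Matrix m n R}
    (h : ∀ w, Tendsto (fun a => f a *ᵥ w) l (𝓝 0)) : Tendsto f l (𝓝 0) := by
  refine tendsto_pi_nhds.2 fun i => tendsto_pi_nhds.2 fun j => ?_
  simpa only [Function.comp_def, mulVec_single_one, col_apply, Pi.zero_apply, zero_apply]
    using ((continuous_apply i).tendsto 0).comp (h (Pi.single j 1))

end Matrix

theorem trace_transpose_mul_sub_smul_nonpos {m κ : Type*} [Fintype m] [Fintype κ]
    (φ φ' : m → EuclideanSpace ℝ κ) {γ : ℝ} (hγ : 0 < γ)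
    (h : (1 / γ) * ∑ i, ‖φ i‖ ^ 2 ≤ ∑ i, ⟪φ i, φ' i⟫) :
    ((Matrix.of fun i j => φ i j)ᵀ *
      (Matrix.of (fun i j => φ i j) - γ • Matrix.of fun i j => φ' i j)).trace ≤ 0 := by
  rw [Matrix.mul_sub, Matrix.mul_smul, Matrix.trace_sub, Matrix.trace_smul,
    Matrix.trace_transpose_of_mul_of, Matrix.trace_transpose_of_mul_of, smul_eq_mul]
  simp_rw [real_inner_self_eq_norm_sq]
  rw [one_div_mul_eq_div, div_le_iff₀' hγ] at h
  linarith

theorem stmt_7_general (n d : ℕ) (hd : 0 < d)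
    (φ φ' : Fin n → EuclideanSpace ℝ (Fin d)) (γ : ℝ) (hγ0 : 0 < γ)
    (h : (1 / γ) * ∑ i : Fin n, ‖φ i‖ ^ 2 ≤ ∑ i : Fin n, ⟪φ i, φ' i⟫)
    (M : Matrix (Fin d) (Fin d) ℝ)
    (hM : M = (Matrix.of fun i j => φ i j)ᵀ *
        (Matrix.of (fun i j => φ i j) - γ • Matrix.of fun i j => φ' i j)) :
    ∀ η : ℝ, 0 < η →
      (¬ Filter.Tendsto
          (fun k : ℕ => ((1 : Matrix (Fin d) (Fin d) ℂ) - (η : ℂ) • M.map (algebraMap ℝ ℂ)) ^ k)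
          Filter.atTop (nhds 0)) ∧
      ¬ ∀ w₀ : Fin d → ℝ,
          Filter.Tendsto
            (fun k : ℕ => (((1 : Matrix (Fin d) (Fin d) ℝ) - η • M) ^ k).mulVec w₀)
            Filter.atTop (nhds 0) := by
  intro η hη
  have : Nonempty (Fin d) := Fin.pos_iff_nonempty.1 hd
  set A : Matrix (Fin d) (Fin d) ℂ := 1 - (η : ℂ) • M.map (algebraMap ℝ ℂ)
  have hM0 : M.trace ≤ 0 := hM ▸ trace_transpose_mul_sub_smul_nonpos φ φ' hγ0 h
  have htrace : A.trace.re = d - η * M.trace := by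
    rw [Matrix.trace_sub, Matrix.trace_smul, ← AddMonoidHom.map_trace, Matrix.trace_one]
    simp
  obtain ⟨μ, hμ, hre⟩ := A.exists_isRoot_charpoly_le_re_of_card_mul_le (c := 1)
    (by rw [htrace, Fintype.card_fin]; nlinarith)
  have hnot : ¬ Tendsto (fun k : ℕ => A ^ k) atTop (𝓝 0) := fun hconv =>
    (Matrix.norm_lt_one_of_isRoot_charpoly_of_tendsto_pow hconv hμ).not_ge
      (hre.trans (Complex.re_le_norm μ))
  refine ⟨hnot, fun hall => hnot ?_⟩
  have hA : A = (1 - η • M).map (algebraMap ℝ ℂ) := by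
    simp [A, Matrix.map_sub, Matrix.map_smul]
  simp only [hA, ← Matrix.map_pow]
  simpa [Function.comp_def] using
    ((continuous_id.matrix_map Complex.continuous_ofReal).tendsto 0).comp
      (Matrix.tendsto_zero_of_forall_tendsto_mulVec hall)

theorem stmt_7 (n d : ℕ) (hn : 0 < n) (hd : 0 < d)
    (φ φ' : Fin n → EuclideanSpace ℝ (Fin d)) (γ : ℝ) (hγ0 : 0 < γ) (hγ1 : γ ≤ 1)
    (h : (1 / γ) * ∑ i : Fin n, ‖φ i‖ ^ 2 ≤ ∑ i : Fin n, ⟪φ i, φ' i⟫)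
    (M : Matrix (Fin d) (Fin d) ℝ)
    (hM : M = (Matrix.of fun i j => φ i j)ᵀ *
        (Matrix.of (fun i j => φ i j) - γ • Matrix.of fun i j => φ' i j)) :
    ∀ η : ℝ, 0 < η →
      (¬ Filter.Tendsto
          (fun k : ℕ => ((1 : Matrix (Fin d) (Fin d) ℂ) - (η : ℂ) • M.map (algebraMap ℝ ℂ)) ^ k)
          Filter.atTop (nhds 0)) ∧
      ¬ ∀ w₀ : Fin d → ℝ,
          Filter.Tendsto
            (fun k : ℕ => (((1 : Matrix (Fin d) (Fin d) ℝ) - η • M) ^ k).mulVec w₀)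
            Filter.atTop (nhds 0) :=
  stmt_7_general n d hd φ φ' γ hγ0 h M hM
end

section
/- (Scalar core of Lemma B.3) Let λ ∈ ℂ with Re(λ) > 0 and let η > 0 satisfy η·|λ|² ≤ Re(λ). Then for every natural number k ≥ 1, |1 − ηλ|^k · |λ| ≤ 2|λ| / (e · k · η · Re(λ)). -/
/-!
The step-size condition `η‖z‖² ≤ Re z` gives `‖1 - ηz‖² = 1 - 2η Re z + η²‖z‖² ≤ 1 - η Re z`,
so `‖1 - ηz‖ᵏ ≤ exp (-kη Re z / 2)`, and `exp (-t) ≤ 1 / (e t)` finishes the bound.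
-/

namespace Complex

theorem norm_one_sub_ofReal_mul_sq (η : ℝ) (z : ℂ) :
    ‖1 - (η : ℂ) * z‖ ^ 2 = 1 - 2 * (η * z.re) + η ^ 2 * ‖z‖ ^ 2 := by
  simp only [Complex.sq_norm, normSq_apply, sub_re, sub_im, mul_re, mul_im, one_re, one_im,
    ofReal_re, ofReal_im]
  ring

theorem norm_one_sub_ofReal_mul_le_exp {η : ℝ} (hη : 0 ≤ η) {z : ℂ}
    (hstep : η * ‖z‖ ^ 2 ≤ z.re) :
    ‖1 - (η : ℂ) * z‖ ≤ Real.exp (-(η * z.re / 2)) := by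
  have hsq : ‖1 - (η : ℂ) * z‖ ^ 2 ≤ Real.exp (-(η * z.re / 2)) ^ 2 :=
    calc ‖1 - (η : ℂ) * z‖ ^ 2 = 1 - 2 * (η * z.re) + η * (η * ‖z‖ ^ 2) := by
          rw [norm_one_sub_ofReal_mul_sq]; ring
      _ ≤ 1 - η * z.re := by nlinarith [mul_le_mul_of_nonneg_left hstep hη]
      _ ≤ Real.exp (-(η * z.re)) := by linarith [Real.add_one_le_exp (-(η * z.re))]
      _ = Real.exp (-(η * z.re / 2)) ^ 2 := by rw [← Real.exp_nat_mul]; ring_nf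
  exact (pow_le_pow_iff_left₀ (norm_nonneg _) (Real.exp_pos _).le two_ne_zero).mp hsq

end Complex

theorem Real.exp_neg_le_inv_exp_one_mul {t : ℝ} (ht : 0 < t) :
    Real.exp (-t) ≤ (Real.exp 1 * t)⁻¹ := by
  rw [Real.exp_neg]
  exact inv_anti₀ (by positivity) Real.exp_one_mul_le_exp

theorem stmt_10 (z : ℂ) (hre : 0 < z.re) (η : ℝ) (hη : 0 < η)
    (hstep : η * ‖z‖ ^ 2 ≤ z.re) (k : ℕ) (hk : 1 ≤ k) :
    ‖1 - (η : ℂ) * z‖ ^ k * ‖z‖ ≤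
      2 * ‖z‖ / (Real.exp 1 * k * η * z.re) := by
  have hk₀ : (0 : ℝ) < k := by exact_mod_cast hk
  have ht : 0 < k * (η * z.re) / 2 := by positivity
  have hpow : ‖1 - (η : ℂ) * z‖ ^ k ≤ (Real.exp 1 * (k * (η * z.re) / 2))⁻¹ :=
    calc ‖1 - (η : ℂ) * z‖ ^ k ≤ Real.exp (-(η * z.re / 2)) ^ k :=
          pow_le_pow_left₀ (norm_nonneg _) (Complex.norm_one_sub_ofReal_mul_le_exp hη.le hstep) k
      _ = Real.exp (-(k * (η * z.re) / 2)) := by rw [← Real.exp_nat_mul]; ring_nf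
      _ ≤ _ := Real.exp_neg_le_inv_exp_one_mul ht
  calc ‖1 - (η : ℂ) * z‖ ^ k * ‖z‖ ≤ (Real.exp 1 * (k * (η * z.re) / 2))⁻¹ * ‖z‖ := by gcongr
    _ = 2 * ‖z‖ / (Real.exp 1 * k * η * z.re) := by field_simp
end
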